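/- Let G(E) be a well-formed TFG for (N1,m1) ▷_E (N2,m2) and c a well-defined configuration. If p, q are nodes with c(p) ≠ ⊥ and p →* q, then there exists a well-defined configuration c' with c'(q) ≥ c'(p) = c(p) and c'(v) = c(v) for every node v not in succ(p). -/

import Mathlib

open Finset

/-- A Petri net over a type of places `P`. -/
structure PetriNet (P : Type) where
  Trans : Type
  pre : Trans → P → ℕ
  post : Trans → P → ℕ

/-- Firing relation between markings. -/
def PetriNet.fire {P : Type} (N : PetriNet P) (m m' : P → ℕ) : Prop :=
  ∃ t : N.Trans, (∀ p, N.pre t p ≤ m p) ∧ ∀ p, m' p = m p - N.pre t p + N.post t p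

/-- Reachability of a marking from an initial one. -/
def PetriNet.reach {P : Type} (N : PetriNet P) (m0 m : P → ℕ) : Prop :=
  Relation.ReflTransGen N.fire m0 m

/-- A marked net is safe (1-bounded) when every reachable marking has at most one token per place. -/
def PetriNet.Safe {P : Type} (N : PetriNet P) (m0 : P → ℕ) : Prop :=
  ∀ m, N.reach m0 m → ∀ p, m p ≤ 1

/-- Two places are concurrent when some reachable marking marks both positively. -/
def PetriNet.ConcPlaces {P : Type} (N : PetriNet P) (m0 : P → ℕ) (p q : P) : Prop :=
  ∃ m, N.reach m0 m ∧ 0 < m p ∧ 0 < m q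

/-- A Token Flow Graph: redundancy arcs `R`, agglomeration arcs `A` (disjoint from `R`,
enforced in well-formedness), and constant nodes given by `kval`. -/
structure TFG (V : Type) [DecidableEq V] where
  R : Finset (V × V)
  A : Finset (V × V)
  kval : V → Option ℕ

variable {V : Type} [DecidableEq V]

def TFG.Edge (G : TFG V) (v w : V) : Prop := (v, w) ∈ G.R ∨ (v, w) ∈ G.A

/-- `G.Reach v w` means `v →* w`. -/
def TFG.Reach (G : TFG V) : V → V → Prop := Relation.ReflTransGen G.Edge

/-- Successor set `succ(v)` (includes `v` itself). -/
def TFG.succs (G : TFG V) (v : V) : Set V := {w | G.Reach v w}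

/-- A root has no incoming arc. -/
def TFG.IsRoot (G : TFG V) (v : V) : Prop := ∀ w, ¬ G.Edge w v

/-- A ∘-leaf has no outgoing agglomeration arc. -/
def TFG.IsCircLeaf (G : TFG V) (v : V) : Prop := ∀ w, (v, w) ∉ G.A

/-- The set `X` such that `v ∘→ X` (agglomeration children of `v`). -/
def TFG.aggChildren (G : TFG V) (v : V) : Finset V :=
  (G.A.filter (fun e => e.1 = v)).image Prod.snd

/-- The set `X` such that `X →• v` (redundancy parents of `v`). -/
def TFG.redParents (G : TFG V) (v : V) : Finset V :=
  (G.R.filter (fun e => e.2 = v)).image Prod.fst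

/-- A configuration is a partial valuation of the nodes; it must agree with constant nodes. -/
def TFG.IsConfig (G : TFG V) (c : V → Option ℕ) : Prop :=
  ∀ v n, G.kval v = some n → c v = some n

/-- A configuration is total when it is defined on every node. -/
def TotalConf (c : V → Option ℕ) : Prop := ∀ v, c v ≠ none

/-- Value of a configuration at a node (0 if undefined). -/
def cval (c : V → Option ℕ) (v : V) : ℕ := (c v).getD 0

/-- Well-definedness of a configuration: conditions (CBot) and (CEq). -/
def TFG.WellDef (G : TFG V) (c : V → Option ℕ) : Prop :=
  (∀ v w, G.Edge v w → (c v = none ↔ c w = none)) ∧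
  (∀ v n, c v = some n →
    ((G.aggChildren v).Nonempty → n = ∑ w ∈ G.aggChildren v, cval c w) ∧
    ((G.redParents v).Nonempty → n = ∑ w ∈ G.redParents v, cval c w))

/-- A system of reduction equations: `(v, X)` stands for the equation `v = ∑_{w ∈ X} w`. -/
abbrev EqSys (V : Type) := Finset (V × Finset V)

/-- A (non-negative integer) solution of the system `E`. -/
def Solves (E : EqSys V) (s : V → ℕ) : Prop :=
  ∀ e ∈ E, s e.1 = ∑ w ∈ e.2, s w

/-- `E, ⟦c⟧` is consistent: some solution of `E` extends the partial valuation `c`. -/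
def ConsistentWith (E : EqSys V) (c : V → Option ℕ) : Prop :=
  ∃ s : V → ℕ, Solves E s ∧ ∀ v n, c v = some n → s v = n

/-- Variables occurring in `E`. -/
def fvars (E : EqSys V) : Set V := {v | ∃ e ∈ E, v = e.1 ∨ v ∈ e.2}

/-- View a marking over the set of places `P` as a partial configuration over `V`. -/
def mconf (P : Set V) [DecidablePred (· ∈ P)] (m : ↥P → ℕ) : V → Option ℕ :=
  fun v => if h : v ∈ P then some (m ⟨v, h⟩) else none

/-- Restriction of a configuration to a set of places, seen as a marking. -/
def restrict (c : V → Option ℕ) (P : Set V) : ↥P → ℕ := fun p => cval c ↑p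

/-- Compatibility `c ≡ m` of a configuration with a marking on `P`. -/
def CompatM (c : V → Option ℕ) (P : Set V) (m : ↥P → ℕ) : Prop :=
  ∀ p : ↥P, c ↑p = some (m p)

/-- A solution of `E` agrees with a marking on `P`. -/
def AgreesOn (s : V → ℕ) (P : Set V) (m : ↥P → ℕ) : Prop := ∀ p : ↥P, s ↑p = m p

/-- `E`-equivalence `(N1,m1) ▷_E (N2,m2)`: conditions (A1), (A2), (A3). -/
structure EEquiv (E : EqSys V) (P1 P2 : Set V)
    (N1 : PetriNet ↥P1) (m1 : ↥P1 → ℕ) (N2 : PetriNet ↥P2) (m2 : ↥P2 → ℕ) : Prop where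
  A1l : ∀ m, N1.reach m1 m → ∃ s, Solves E s ∧ AgreesOn s P1 m
  A1r : ∀ m, N2.reach m2 m → ∃ s, Solves E s ∧ AgreesOn s P2 m
  A2 : ∃ s, Solves E s ∧ AgreesOn s P1 m1 ∧ AgreesOn s P2 m2
  A3 : ∀ m1' m2', (∃ s, Solves E s ∧ AgreesOn s P1 m1' ∧ AgreesOn s P2 m2') →
      (N1.reach m1 m1' ↔ N2.reach m2 m2')

/-- Well-formedness of a TFG for an equivalence statement: conditions (T1)–(T6). -/
structure WellFormed (G : TFG V) (E : EqSys V) (P1 P2 : Set V) : Prop where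
  T1 : {v | G.kval v = none} = P1 ∪ P2 ∪ fvars E
  T2 : ∀ v, G.kval v ≠ none → G.IsRoot v
  T3a : ∀ p p' q, (p, q) ∈ G.A → G.Edge p' q → p' = p
  T3b : ∀ p q, ¬((p, q) ∈ G.R ∧ (p, q) ∈ G.A)
  T4 : ∀ v X, ((X = G.aggChildren v ∨ X = G.redParents v) ∧ X.Nonempty) ↔ (v, X) ∈ E
  T5 : ∀ v, ¬ Relation.TransGen G.Edge v v
  T6root : ∀ v, G.kval v = none → (G.IsRoot v ↔ v ∈ P2)
  T6leaf : ∀ v, G.kval v = none → (G.IsCircLeaf v ↔ v ∈ P1)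

/-- Node concurrency relation of the TFG: both nodes are positive in some
total, well-defined configuration whose restriction to `N2` is reachable. -/
def NodeConc (G : TFG V) (P2 : Set V) [DecidablePred (· ∈ P2)]
    (N2 : PetriNet ↥P2) (m2 : ↥P2 → ℕ) (v w : V) : Prop :=
  ∃ c, G.IsConfig c ∧ TotalConf c ∧ G.WellDef c ∧ N2.reach m2 (restrict c P2) ∧
    0 < cval c v ∧ 0 < cval c w

/-! Propagate the value `n` of `p` downwards through the cone `succ(p)`: an agglomeration node
passes all of its value to a single selected child, a node with redundancy parents receives their
sum, and nothing outside the cone changes. By (T3) a node with an agglomeration parent has no other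
parent, so both kinds of equations (CEq) hold by construction inside the cone; on its boundary they
reduce to those of `c`, because the only cone node with a parent outside it is `p`, whose value is
kept. Selecting `v` at `p` for an arc `p → v` gives `v` a value at least `n`, and the claim follows
by induction on the path, acyclicity (T5) guaranteeing that later steps leave `p` untouched. -/

namespace TFG

open Relation
open scoped Classical

variable {G : TFG V}

def aggParents (G : TFG V) (u : V) : Finset V :=
  (G.A.filter (fun e => e.2 = u)).image Prod.fst

theorem mem_aggChildren {y w : V} : w ∈ G.aggChildren y ↔ (y, w) ∈ G.A := by
  simp [aggChildren]

theorem mem_redParents {y u : V} : y ∈ G.redParents u ↔ (y, u) ∈ G.R := by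
  simp [redParents]

theorem mem_aggParents {y u : V} : y ∈ G.aggParents u ↔ (y, u) ∈ G.A := by
  simp [aggParents]

theorem wellFounded_edge (hacyc : ∀ v, ¬ TransGen G.Edge v v) : WellFounded G.Edge := by
  let ancestors : V → Finset V := fun u =>
    ((G.R ∪ G.A).image Prod.fst).filter (fun z => TransGen G.Edge z u)
  refine Subrelation.wf (fun {y u} hyu => ?_) (measure fun u => (ancestors u).card).wf
  refine Finset.card_lt_card ((Finset.ssubset_iff_of_subset fun z hz => ?_).2 ⟨y, ?_, ?_⟩)
  · simp only [ancestors, Finset.mem_filter] at hz ⊢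
    exact ⟨hz.1, hz.2.tail hyu⟩
  · simp only [ancestors, Finset.mem_filter, Finset.mem_image, Finset.mem_union]
    exact ⟨⟨(y, u), hyu, rfl⟩, TransGen.single hyu⟩
  · simp only [ancestors, Finset.mem_filter]
    exact fun hy => hacyc y hy.2

theorem aggParents_eq_singleton (hT3a : ∀ p p' q, (p, q) ∈ G.A → G.Edge p' q → p' = p)
    {y u : V} (hyu : (y, u) ∈ G.A) : G.aggParents u = {y} :=
  Finset.eq_singleton_iff_unique_mem.2
    ⟨mem_aggParents.2 hyu, fun z hz => hT3a y z u hyu (Or.inr (mem_aggParents.1 hz))⟩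

theorem redParents_eq_empty (hT3a : ∀ p p' q, (p, q) ∈ G.A → G.Edge p' q → p' = p)
    (hT3b : ∀ p q, ¬((p, q) ∈ G.R ∧ (p, q) ∈ G.A)) {y u : V} (hyu : (y, u) ∈ G.A) :
    G.redParents u = ∅ :=
  Finset.eq_empty_of_forall_notMem fun z hz =>
    have hzu := mem_redParents.1 hz
    hT3b y u ⟨hT3a y z u hyu (Or.inl hzu) ▸ hzu, hyu⟩

theorem aggParents_eq_empty (hT3a : ∀ p p' q, (p, q) ∈ G.A → G.Edge p' q → p' = p)
    (hT3b : ∀ p q, ¬((p, q) ∈ G.R ∧ (p, q) ∈ G.A)) {y u : V} (hyu : (y, u) ∈ G.R) :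
    G.aggParents u = ∅ :=
  Finset.eq_empty_of_forall_notMem fun z hz =>
    have hzu := mem_aggParents.1 hz
    hT3b z u ⟨hT3a z y u hzu (Or.inl hyu) ▸ hyu, hzu⟩

theorem not_reach_of_edge (hacyc : ∀ v, ¬ TransGen G.Edge v v) {x y : V} (hxy : G.Edge x y) :
    ¬ G.Reach y x :=
  fun hyx => hacyc x (TransGen.head' hxy hyx)

theorem not_reach_or_eq_of_mem_A (hT3a : ∀ p p' q, (p, q) ∈ G.A → G.Edge p' q → p' = p)
    {p u w : V} (hu : ¬ G.Reach p u) (huw : (u, w) ∈ G.A) : ¬ G.Reach p w ∨ w = p := by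
  refine or_iff_not_imp_right.2 fun hwp hw => ?_
  obtain h | ⟨z, hz, hzw⟩ := ReflTransGen.cases_tail hw
  · exact hwp h
  · exact hu (hT3a u z w huw hzw ▸ hz)

theorem ne_none_of_reach {c : V → Option ℕ} (hwd : G.WellDef c) {p u : V} (hp : c p ≠ none)
    (hu : G.Reach p u) : c u ≠ none := by
  induction hu with
  | refl => exact hp
  | tail _ hzu ih => exact fun hn => ih ((hwd.1 _ _ hzu).2 hn)

theorem exists_selection (G : TFG V) (p v : V) : ∃ sel : V → V,
    (∀ y w, (y, w) ∈ G.A → (y, sel y) ∈ G.A) ∧ ((p, v) ∈ G.A → sel p = v) := by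
  refine ⟨fun y => if y = p ∧ (p, v) ∈ G.A then v
      else if hy : ∃ w, (y, w) ∈ G.A then hy.choose else y,
    fun y w hyw => ?_, fun hpv => if_pos ⟨rfl, hpv⟩⟩
  dsimp only
  split_ifs with hyp hy
  · obtain ⟨rfl, hpv⟩ := hyp
    exact hpv
  · exact hy.choose_spec
  · exact absurd ⟨w, hyw⟩ hy

def IsPropagation (G : TFG V) (sel : V → V) (c : V → Option ℕ) (p : V) (n : ℕ)
    (h : V → ℕ) : Prop :=
  ∀ u, h u = if u = p then n else if G.Reach p u then
    ∑ y ∈ G.aggParents u, (if sel y = u then h y else 0) + ∑ y ∈ G.redParents u, h y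
  else cval c u

theorem exists_isPropagation (hacyc : ∀ v, ¬ TransGen G.Edge v v) (sel : V → V)
    (c : V → Option ℕ) (p : V) (n : ℕ) : ∃ h, G.IsPropagation sel c p n h := by
  let F : ∀ u, (∀ y, G.Edge y u → ℕ) → ℕ := fun u ih =>
    if u = p then n else if G.Reach p u then
      ∑ y ∈ (G.aggParents u).attach,
          (if sel y = u then ih y (Or.inr (mem_aggParents.1 y.2)) else 0) +
        ∑ y ∈ (G.redParents u).attach, ih y (Or.inl (mem_redParents.1 y.2))
    else cval c u
  refine ⟨(wellFounded_edge hacyc).fix F, fun u => ?_⟩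
  rw [WellFounded.fix_eq]
  simp only [F, Finset.sum_attach (G.aggParents u) (fun y => if sel y = u then _ else 0),
    Finset.sum_attach (G.redParents u) (fun y => (wellFounded_edge hacyc).fix F y)]

namespace IsPropagation

variable {sel : V → V} {c : V → Option ℕ} {p : V} {n : ℕ} {h : V → ℕ}

theorem apply_self (hh : G.IsPropagation sel c p n h) : h p = n := by
  rw [hh p, if_pos rfl]

theorem apply_of_not_reach (hh : G.IsPropagation sel c p n h) {u : V} (hu : ¬ G.Reach p u) :
    h u = cval c u := by
  have hup : u ≠ p := by rintro rfl; exact hu ReflTransGen.refl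
  rw [hh u, if_neg hup, if_neg hu]

theorem apply_eq_cval (hh : G.IsPropagation sel c p n h) (hp : c p = some n) {u : V}
    (hu : ¬ G.Reach p u ∨ u = p) : h u = cval c u := by
  rcases hu with hu | rfl
  · exact hh.apply_of_not_reach hu
  · rw [hh.apply_self, cval, hp, Option.getD_some]

theorem apply_of_mem_A (hT3a : ∀ p p' q, (p, q) ∈ G.A → G.Edge p' q → p' = p)
    (hT3b : ∀ p q, ¬((p, q) ∈ G.R ∧ (p, q) ∈ G.A)) (hh : G.IsPropagation sel c p n h)
    {y u : V} (hyu : (y, u) ∈ G.A) (hup : u ≠ p) (hu : G.Reach p u) :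
    h u = if sel y = u then h y else 0 := by
  rw [hh u, if_neg hup, if_pos hu, aggParents_eq_singleton hT3a hyu,
    redParents_eq_empty hT3a hT3b hyu, Finset.sum_singleton, Finset.sum_empty, add_zero]

theorem apply_of_mem_R (hT3a : ∀ p p' q, (p, q) ∈ G.A → G.Edge p' q → p' = p)
    (hT3b : ∀ p q, ¬((p, q) ∈ G.R ∧ (p, q) ∈ G.A)) (hh : G.IsPropagation sel c p n h)
    {y u : V} (hyu : (y, u) ∈ G.R) (hup : u ≠ p) (hu : G.Reach p u) :
    h u = ∑ y ∈ G.redParents u, h y := by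
  rw [hh u, if_neg hup, if_pos hu, aggParents_eq_empty hT3a hT3b hyu, Finset.sum_empty,
    zero_add]

theorem sum_aggChildren (hT3a : ∀ p p' q, (p, q) ∈ G.A → G.Edge p' q → p' = p)
    (hT3b : ∀ p q, ¬((p, q) ∈ G.R ∧ (p, q) ∈ G.A)) (hacyc : ∀ v, ¬ TransGen G.Edge v v)
    (hsel : ∀ y w, (y, w) ∈ G.A → (y, sel y) ∈ G.A) (hh : G.IsPropagation sel c p n h)
    {u : V} (hu : G.Reach p u) (hne : (G.aggChildren u).Nonempty) :
    ∑ w ∈ G.aggChildren u, h w = h u := by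
  have hchild : ∀ w ∈ G.aggChildren u, h w = if sel u = w then h u else 0 := by
    intro w hw
    have huw : (u, w) ∈ G.A := mem_aggChildren.1 hw
    have hwp : w ≠ p := by
      rintro rfl
      exact not_reach_of_edge hacyc (Or.inr huw) hu
    exact hh.apply_of_mem_A hT3a hT3b huw hwp (ReflTransGen.tail hu (Or.inr huw))
  obtain ⟨w, hw⟩ := hne
  rw [Finset.sum_congr rfl hchild, Finset.sum_ite_eq,
    if_pos (mem_aggChildren.2 (hsel u w (mem_aggChildren.1 hw)))]

theorem le_apply_of_edge (hT3a : ∀ p p' q, (p, q) ∈ G.A → G.Edge p' q → p' = p)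
    (hT3b : ∀ p q, ¬((p, q) ∈ G.R ∧ (p, q) ∈ G.A)) (hacyc : ∀ v, ¬ TransGen G.Edge v v)
    (hh : G.IsPropagation sel c p n h) {v : V} (hpv : G.Edge p v)
    (hsel : (p, v) ∈ G.A → sel p = v) :
    n ≤ h v := by
  have hvp : v ≠ p := by
    rintro rfl
    exact not_reach_of_edge hacyc hpv ReflTransGen.refl
  have hv : G.Reach p v := ReflTransGen.single hpv
  rcases hpv with hR | hA
  · rw [hh.apply_of_mem_R hT3a hT3b hR hvp hv, ← hh.apply_self]
    exact Finset.single_le_sum (fun _ _ => Nat.zero_le _) (mem_redParents.2 hR)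
  · rw [hh.apply_of_mem_A hT3a hT3b hA hvp hv, if_pos (hsel hA), hh.apply_self]

end IsPropagation

noncomputable def propagateConf (G : TFG V) (c : V → Option ℕ) (p : V) (h : V → ℕ) :
    V → Option ℕ :=
  fun u => if G.Reach p u then some (h u) else c u

section propagateConf

variable {sel : V → V} {c : V → Option ℕ} {p : V} {n : ℕ} {h : V → ℕ}

theorem propagateConf_of_reach {u : V} (hu : G.Reach p u) :
    G.propagateConf c p h u = some (h u) :=
  if_pos hu

theorem propagateConf_of_not_reach {u : V} (hu : ¬ G.Reach p u) :
    G.propagateConf c p h u = c u :=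
  if_neg hu

theorem cval_propagateConf (hh : G.IsPropagation sel c p n h) (u : V) :
    cval (G.propagateConf c p h) u = h u := by
  by_cases hu : G.Reach p u
  · rw [cval, propagateConf_of_reach hu, Option.getD_some]
  · rw [cval, propagateConf_of_not_reach hu, ← cval, hh.apply_of_not_reach hu]

theorem propagateConf_eq_none_iff (hwd : G.WellDef c) (hp : c p ≠ none) (u : V) :
    G.propagateConf c p h u = none ↔ c u = none := by
  by_cases hu : G.Reach p u
  · rw [propagateConf_of_reach hu]
    exact iff_of_false (Option.some_ne_none _) (ne_none_of_reach hwd hp hu)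
  · rw [propagateConf_of_not_reach hu]

theorem isConfig_propagateConf (hT2 : ∀ v, G.kval v ≠ none → G.IsRoot v) (hc : G.IsConfig c)
    (hh : G.IsPropagation sel c p n h) (hp : c p = some n) :
    G.IsConfig (G.propagateConf c p h) := by
  intro u k hk
  by_cases hu : G.Reach p u
  · obtain hup | ⟨z, -, hzu⟩ := ReflTransGen.cases_tail hu
    · subst hup
      rw [propagateConf_of_reach hu, hh.apply_self, ← hp, hc _ k hk]
    · exact absurd hzu (hT2 u (by simp [hk]) z)
  · rw [propagateConf_of_not_reach hu]
    exact hc u k hk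

theorem wellDef_propagateConf (hT3a : ∀ p p' q, (p, q) ∈ G.A → G.Edge p' q → p' = p)
    (hT3b : ∀ p q, ¬((p, q) ∈ G.R ∧ (p, q) ∈ G.A)) (hacyc : ∀ v, ¬ TransGen G.Edge v v)
    (hsel : ∀ y w, (y, w) ∈ G.A → (y, sel y) ∈ G.A) (hwd : G.WellDef c)
    (hh : G.IsPropagation sel c p n h) (hp : c p = some n) :
    G.WellDef (G.propagateConf c p h) := by
  have hp' : c p ≠ none := by simp [hp]
  refine ⟨fun v w hvw => ?_, fun u m hm => ?_⟩
  · rw [propagateConf_eq_none_iff hwd hp', propagateConf_eq_none_iff hwd hp']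
    exact hwd.1 v w hvw
  simp only [cval_propagateConf hh]
  by_cases hu : G.Reach p u
  · rw [propagateConf_of_reach hu, Option.some_inj] at hm
    subst hm
    refine ⟨fun hne => (hh.sum_aggChildren hT3a hT3b hacyc hsel hu hne).symm,
      fun ⟨y, hy⟩ => ?_⟩
    obtain rfl | hup := eq_or_ne u p
    · rw [hh.apply_self, (hwd.2 u n hp).2 ⟨y, hy⟩]
      refine Finset.sum_congr rfl fun z hz => (hh.apply_of_not_reach ?_).symm
      exact not_reach_of_edge hacyc (Or.inl (mem_redParents.1 hz))
    · exact hh.apply_of_mem_R hT3a hT3b (mem_redParents.1 hy) hup hu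
  · rw [propagateConf_of_not_reach hu] at hm
    obtain ⟨hagg, hred⟩ := hwd.2 u m hm
    refine ⟨fun hne => (hagg hne).trans (Finset.sum_congr rfl fun w hw => ?_),
      fun hne => (hred hne).trans (Finset.sum_congr rfl fun y hy => ?_)⟩
    · have hw' := not_reach_or_eq_of_mem_A hT3a hu (mem_aggChildren.1 hw)
      exact (hh.apply_eq_cval hp hw').symm
    · refine (hh.apply_of_not_reach fun hpy => hu ?_).symm
      exact ReflTransGen.tail hpy (Or.inl (mem_redParents.1 hy))

end propagateConf

theorem exists_wellDef_of_edge (hT2 : ∀ v, G.kval v ≠ none → G.IsRoot v)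
    (hT3a : ∀ p p' q, (p, q) ∈ G.A → G.Edge p' q → p' = p)
    (hT3b : ∀ p q, ¬((p, q) ∈ G.R ∧ (p, q) ∈ G.A)) (hacyc : ∀ v, ¬ TransGen G.Edge v v)
    {c : V → Option ℕ} (hc : G.IsConfig c) (hwd : G.WellDef c) {p v : V} {n : ℕ}
    (hp : c p = some n) (hpv : G.Edge p v) :
    ∃ c' : V → Option ℕ, G.IsConfig c' ∧ G.WellDef c' ∧ c' p = some n ∧
      (∃ m, n ≤ m ∧ c' v = some m) ∧ ∀ u, u ∉ G.succs p → c' u = c u := by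
  obtain ⟨sel, hsel, hselp⟩ := exists_selection G p v
  obtain ⟨h, hh⟩ := exists_isPropagation hacyc sel c p n
  refine ⟨G.propagateConf c p h, isConfig_propagateConf hT2 hc hh hp,
    wellDef_propagateConf hT3a hT3b hacyc hsel hwd hh hp, ?_,
    ⟨h v, hh.le_apply_of_edge hT3a hT3b hacyc hpv hselp,
      propagateConf_of_reach (ReflTransGen.single hpv)⟩,
    fun u hu => propagateConf_of_not_reach hu⟩
  rw [propagateConf_of_reach ReflTransGen.refl, hh.apply_self]

theorem exists_wellDef_of_reach (hT2 : ∀ v, G.kval v ≠ none → G.IsRoot v)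
    (hT3a : ∀ p p' q, (p, q) ∈ G.A → G.Edge p' q → p' = p)
    (hT3b : ∀ p q, ¬((p, q) ∈ G.R ∧ (p, q) ∈ G.A)) (hacyc : ∀ v, ¬ TransGen G.Edge v v)
    {c : V → Option ℕ} (hc : G.IsConfig c) (hwd : G.WellDef c) {p q : V} {n : ℕ}
    (hp : c p = some n) (hpq : G.Reach p q) :
    ∃ c' : V → Option ℕ, G.IsConfig c' ∧ G.WellDef c' ∧ c' p = some n ∧ n ≤ cval c' q ∧
      ∀ u, u ∉ G.succs p → c' u = c u := by
  induction hpq using ReflTransGen.head_induction_on generalizing c n with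
  | refl => exact ⟨c, hc, hwd, hp, by rw [cval, hp, Option.getD_some], fun _ _ => rfl⟩
  | @head p y hpy _ ih =>
    obtain ⟨c₁, hc₁, hwd₁, hc₁p, ⟨m, hnm, hc₁y⟩, hout₁⟩ :=
      exists_wellDef_of_edge hT2 hT3a hT3b hacyc hc hwd hp hpy
    obtain ⟨c₂, hc₂, hwd₂, -, hmq, hout₂⟩ := ih hc₁ hwd₁ hc₁y
    refine ⟨c₂, hc₂, hwd₂, ?_, hnm.trans hmq, fun u hu => ?_⟩
    · rw [hout₂ p (not_reach_of_edge hacyc hpy), hc₁p]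
    · rw [hout₂ u fun hyu => hu (ReflTransGen.head hpy hyu), hout₁ u hu]

end TFG

theorem token_propagation_forward_general {V : Type} [DecidableEq V] (G : TFG V) (E : EqSys V)
    (P1 P2 : Set V) (hwf : WellFormed G E P1 P2)
    (c : V → Option ℕ) (hc : G.IsConfig c) (hwd : G.WellDef c)
    (p q : V) (n : ℕ) (hp : c p = some n) (hpq : G.Reach p q) :
    ∃ c' : V → Option ℕ, G.IsConfig c' ∧ G.WellDef c' ∧
      c' p = some n ∧ n ≤ cval c' q ∧
      (∀ v, v ∉ G.succs p → c' v = c v) :=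
  TFG.exists_wellDef_of_reach hwf.T2 hwf.T3a hwf.T3b hwf.T5 hc hwd hp hpq

theorem token_propagation_forward {V : Type} [DecidableEq V] (G : TFG V) (E : EqSys V)
    (P1 P2 : Set V) [DecidablePred (· ∈ P1)] [DecidablePred (· ∈ P2)]
    (N1 : PetriNet ↥P1) (m1 : ↥P1 → ℕ) (N2 : PetriNet ↥P2) (m2 : ↥P2 → ℕ)
    (hwf : WellFormed G E P1 P2) (heq : EEquiv E P1 P2 N1 m1 N2 m2)
    (c : V → Option ℕ) (hc : G.IsConfig c) (hwd : G.WellDef c)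
    (p q : V) (n : ℕ) (hp : c p = some n) (hpq : G.Reach p q) :
    ∃ c' : V → Option ℕ, G.IsConfig c' ∧ G.WellDef c' ∧
      c' p = some n ∧ n ≤ cval c' q ∧
      (∀ v, v ∉ G.succs p → c' v = c v) :=
  token_propagation_forward_general G E P1 P2 hwf c hc hwd p q n hp hpq
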